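/- Fix sets X, Y and a partial function a : Y ⇀ X. Let Reg(PT_XY^a) denote the set of regular elements of the sandwich semigroup PT_XY^a, let Reg(PT(X,B)) denote the set of partial functions g : X ⇀ X with ran(g) ⊆ ran(a) that are regular in the semigroup PT(X,B) = {g : X ⇀ X : ran(g) ⊆ ran(a)} under composition, and let Reg(PT(Y,σ)) denote the set of elements of the semigroup PT(Y,σ) = a⬝(PT_XY) = {a⬝k : k : X ⇀ Y} (under composition of partial self-maps of Y) that are regular in PT(Y,σ). Then the map ψ : Reg(PT_XY^a) → Reg(PT(X,B)) × Reg(PT(Y,σ)) given by ψ(f) = (f⬝a, a⬝f) is well defined and injective, and its image is exactly {(g, h) : g ∈ Reg(PT(X,B)), h ∈ Reg(PT(Y,σ)), a⬝g = h⬝a}. In particular, Reg(PT_XY^a) is a pullback product of Reg(PT(X,B)) and Reg(PT(Y,σ)). -/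

import Mathlib

/-- `f : X ⇀ Y` is a regular element of the sandwich semigroup `PT_XY^a`:
`f = f⬝a⬝g⬝a⬝f` for some `g : X ⇀ Y`. -/
def RegSand {X Y : Type*} (a : Y →. X) (f : X →. Y) : Prop :=
  ∃ g : X →. Y, f = f.comp (a.comp (g.comp (a.comp f)))

/-- `g` is a member of `Reg(PT(X,B))`: a partial self-map of `X` with image contained in
`B = ran a` which is regular within the semigroup `PT(X,B)` under composition. -/
def RegPTXB {X Y : Type*} (a : Y →. X) (g : X →. X) : Prop :=
  g.ran ⊆ a.ran ∧ ∃ k : X →. X, k.ran ⊆ a.ran ∧ g = g.comp (k.comp g)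

/-- `h` is a member of `Reg(PT(Y,σ))`: an element of `a⬝(PT_XY) = {a⬝k : k : X ⇀ Y}` which is
regular within that semigroup under composition.  (Here `a⬝k = k.comp a` applies `a` first.) -/
def RegPTYsigma {X Y : Type*} (a : Y →. X) (h : Y →. Y) : Prop :=
  (∃ k : X →. Y, h = k.comp a) ∧
    ∃ k' : Y →. Y, (∃ k : X →. Y, k' = k.comp a) ∧ h = h.comp (k'.comp h)

/-!
Everything except one step is equational reasoning with associativity of composition, written
here in the paper's left-to-right order (`f⬝g` is `g.comp f`). The exception: a map
`k : X ⇀ X` with `ran k ⊆ ran a` factors as `k = k₂⬝a`, by choosing preimages under `a`.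
So if `g = g⬝k₂⬝a⬝g`, `h = h⬝a⬝k₁⬝h` and `a⬝g = h⬝a`, put `x = k₂⬝h⬝a⬝k₁` and `f = g⬝x⬝h`.
Then `f⬝a = g⬝x⬝a⬝g = g` and `a⬝f = h⬝a⬝x⬝h = h`, so `f = (f⬝a)⬝x⬝(a⬝f)` is regular.
-/

namespace PFun

variable {α β γ : Type*}

theorem mem_comp_iff {f : β →. γ} {g : α →. β} {x : α} {z : γ} :
    z ∈ f.comp g x ↔ ∃ y ∈ g x, z ∈ f y := Part.mem_bind_iff

theorem ran_comp_subset (f : β →. γ) (g : α →. β) : (f.comp g).ran ⊆ f.ran := by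
  rintro z ⟨x, hz⟩
  obtain ⟨y, -, hy⟩ := mem_comp_iff.1 hz
  exact ⟨y, hy⟩

theorem ran_subset_ran_iff_exists_eq_comp {f : β →. γ} {k : α →. γ} :
    k.ran ⊆ f.ran ↔ ∃ k' : α →. β, k = f.comp k' := by
  refine ⟨fun hk => ?_, fun ⟨k', hk'⟩ => hk' ▸ ran_comp_subset f k'⟩
  let s : γ →. β := fun z => ⟨z ∈ f.ran, fun hz => hz.choose⟩
  refine ⟨s.comp k, ext fun x z => ?_⟩
  simp only [mem_comp_iff]
  constructor
  · intro hz
    exact ⟨_, ⟨z, hz, Part.mem_mk_iff.2 ⟨hk ⟨x, hz⟩, rfl⟩⟩, (hk ⟨x, hz⟩).choose_spec⟩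
  · rintro ⟨y, ⟨z', hz', hy⟩, hzy⟩
    obtain ⟨hran, rfl⟩ := Part.mem_mk_iff.1 hy
    rwa [Part.mem_unique hzy hran.choose_spec]

end PFun

open PFun

section

variable {X Y : Type*} {a : Y →. X}

theorem RegSand.regPTXB {f : X →. Y} (hf : RegSand a f) : RegPTXB a (a.comp f) := by
  obtain ⟨g, hg⟩ := hf
  refine ⟨ran_comp_subset a f, a.comp g, ran_comp_subset a g, ?_⟩
  conv_lhs => rw [hg]
  simp only [comp_assoc]

theorem RegSand.regPTYsigma {f : X →. Y} (hf : RegSand a f) : RegPTYsigma a (f.comp a) := by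
  obtain ⟨g, hg⟩ := hf
  refine ⟨⟨f, rfl⟩, g.comp a, ⟨g, rfl⟩, ?_⟩
  conv_lhs => rw [hg]
  simp only [comp_assoc]

theorem RegSand.eq_of_comp_eq {f₁ f₂ : X →. Y} (hf₁ : RegSand a f₁) (hf₂ : RegSand a f₂)
    (hl : a.comp f₁ = a.comp f₂) (hr : f₁.comp a = f₂.comp a) : f₁ = f₂ := by
  obtain ⟨g₁, hg₁⟩ := hf₁
  obtain ⟨g₂, hg₂⟩ := hf₂
  calc f₁ = f₁.comp (a.comp (g₁.comp (a.comp f₂))) := hl ▸ hg₁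
    _ = f₁.comp (a.comp (g₁.comp ((a.comp f₂).comp (a.comp (g₂.comp (a.comp f₂)))))) := by
        conv_lhs => rw [hg₂]
        simp only [comp_assoc]
    _ = (f₁.comp (a.comp (g₁.comp (a.comp f₁)))).comp (a.comp (g₂.comp (a.comp f₂))) := by
        rw [← hl]; simp only [comp_assoc]
    _ = (f₁.comp a).comp (g₂.comp (a.comp f₂)) := by rw [← hg₁, comp_assoc]
    _ = f₂ := by rw [hr, comp_assoc, ← hg₂]

theorem exists_regSand_of_regular {g : X →. X} {h : Y →. Y} {k₁ k₂ : X →. Y}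
    (hg : g = g.comp ((a.comp k₂).comp g)) (hh : h = h.comp ((k₁.comp a).comp h))
    (hc : g.comp a = a.comp h) :
    ∃ f : X →. Y, RegSand a f ∧ a.comp f = g ∧ f.comp a = h := by
  let x : X →. Y := k₁.comp (a.comp (h.comp k₂))
  let f : X →. Y := h.comp (x.comp g)
  have hfg : a.comp f = g :=
    calc a.comp f = (a.comp (h.comp ((k₁.comp a).comp h))).comp (k₂.comp g) := by
          simp only [f, x, comp_assoc]
      _ = g := by
          conv_rhs => rw [hg]
          rw [← hh, ← hc]; simp only [comp_assoc]
  have hfh : f.comp a = h :=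
    calc f.comp a = h.comp (k₁.comp ((a.comp h).comp (k₂.comp (g.comp a)))) := by
          simp only [f, x, comp_assoc]
      _ = h.comp (k₁.comp ((g.comp ((a.comp k₂).comp g)).comp a)) := by
          rw [← hc]; simp only [comp_assoc]
      _ = h := by
          conv_rhs => rw [hh]
          rw [← hg, hc]; simp only [comp_assoc]
  refine ⟨f, ⟨x, ?_⟩, hfg, hfh⟩
  rw [← comp_assoc, hfh, hfg]

theorem exists_regSand_of_regPTXB_of_regPTYsigma {g : X →. X} {h : Y →. Y} (hg : RegPTXB a g)
    (hh : RegPTYsigma a h) (hc : g.comp a = a.comp h) :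
    ∃ f : X →. Y, RegSand a f ∧ a.comp f = g ∧ f.comp a = h := by
  obtain ⟨-, k, hk, hgk⟩ := hg
  obtain ⟨k₂, rfl⟩ := ran_subset_ran_iff_exists_eq_comp.1 hk
  obtain ⟨-, -, ⟨k₁, rfl⟩, hhk⟩ := hh
  exact exists_regSand_of_regular hgk hhk hc

end

/-- The map `ψ : Reg(PT_XY^a) → Reg(PT(X,B)) × Reg(PT(Y,σ))`,
`ψ(f) = (f⬝a, a⬝f)`, is well defined and injective, and its image is exactly the set of pairs
`(g, h)` with `a⬝g = h⬝a`.  Hence `Reg(PT_XY^a)` is a pullback product of `Reg(PT(X,B))` and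
`Reg(PT(Y,σ))`.  (Note `f⬝a = a.comp f`, `a⬝f = f.comp a`, `a⬝g = g.comp a`, `h⬝a = a.comp h`.) -/
theorem pullback_product_RegPTXYa {X Y : Type*} (a : Y →. X) :
    (∀ f : X →. Y, RegSand a f → RegPTXB a (a.comp f) ∧ RegPTYsigma a (f.comp a)) ∧
    (∀ f₁ f₂ : X →. Y, RegSand a f₁ → RegSand a f₂ →
      a.comp f₁ = a.comp f₂ → f₁.comp a = f₂.comp a → f₁ = f₂) ∧
    (∀ (g : X →. X) (h : Y →. Y),
      (RegPTXB a g ∧ RegPTYsigma a h ∧ g.comp a = a.comp h) ↔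
        ∃ f : X →. Y, RegSand a f ∧ a.comp f = g ∧ f.comp a = h) := by
  refine ⟨fun f hf => ⟨hf.regPTXB, hf.regPTYsigma⟩,
    fun f₁ f₂ hf₁ hf₂ hl hr => hf₁.eq_of_comp_eq hf₂ hl hr,
    fun g h => ⟨fun ⟨hg, hh, hc⟩ => exists_regSand_of_regPTXB_of_regPTYsigma hg hh hc, ?_⟩⟩
  rintro ⟨f, hf, rfl, rfl⟩
  exact ⟨hf.regPTXB, hf.regPTYsigma, comp_assoc a f a⟩
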